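/- Let D be a strong digraph of order n = 2m+1 ≥ 5 that contains no cycle passing through all of its T-vertices, let C = x_1x_2…x_{n−1}x_1 be a cycle of length n−1 in D, let x be the unique vertex of D not on C, and suppose x and x_{n−1} are not adjacent; write y = x_{n−1} and p = n−2. If the arcs x_{p−1}x and y x_p are present in D, then for every i ∈ [2, p−2] the vertex x_i is adjacent to x or to y (i.e., d(x_i, {x,y}) ≥ 1). -/

import Mathlib

/-!
Basic framework: finite loopless digraphs (arcs may exist in both directions),
degrees, adjacency, directed cycles (as injective maps from `ZMod k` respecting
arcs), strong and 2-strong connectivity, T-vertices, and the special digraphs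
`D₅`, `D₇`, the classes `L₁`, `L₂`, etc. from the paper
"On Cycles through Vertices of Large Semidegree in Digraphs".
-/

/-- A digraph: a loopless arc relation (arcs `u → v`; both `uv` and `vu` allowed). -/
structure Dgr (V : Type*) where
  Arc : V → V → Prop
  loopless : ∀ v, ¬ Arc v v

namespace Dgr

variable {V : Type*}

/-- Two vertices are adjacent if there is an arc between them in some direction. -/
def Adj (D : Dgr V) (u v : V) : Prop := D.Arc u v ∨ D.Arc v u

/-- Out-degree `d⁺(u)`. -/
noncomputable def outDeg (D : Dgr V) (u : V) : ℕ := {v | D.Arc u v}.ncard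

/-- In-degree `d⁻(u)`. -/
noncomputable def inDeg (D : Dgr V) (u : V) : ℕ := {v | D.Arc v u}.ncard

/-- Degree `d(u) = d⁺(u) + d⁻(u)`. -/
noncomputable def deg (D : Dgr V) (u : V) : ℕ := D.outDeg u + D.inDeg u

/-- `d⁺(u, A)`: number of out-neighbours of `u` in `A`. -/
noncomputable def outDegOn (D : Dgr V) (u : V) (A : Set V) : ℕ := {v ∈ A | D.Arc u v}.ncard

/-- `d⁻(u, A)`: number of in-neighbours of `u` in `A`. -/
noncomputable def inDegOn (D : Dgr V) (u : V) (A : Set V) : ℕ := {v ∈ A | D.Arc v u}.ncard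

/-- `d(u, A) = d⁺(u, A) + d⁻(u, A)`. -/
noncomputable def degOn (D : Dgr V) (u : V) (A : Set V) : ℕ := D.outDegOn u A + D.inDegOn u A

/-- In a digraph of order `2m+1`, a `T`-vertex is one with `d⁺(u) ≥ m` and `d⁻(u) ≥ m`. -/
def TVertex (D : Dgr V) (m : ℕ) (u : V) : Prop := m ≤ D.outDeg u ∧ m ≤ D.inDeg u

/-- A directed cycle of length `k ≥ 2`, given as an injective map `c : ZMod k → V`
with an arc from each `c i` to `c (i+1)`. -/
def IsCycle (D : Dgr V) {k : ℕ} (c : ZMod k → V) : Prop :=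
  2 ≤ k ∧ Function.Injective c ∧ ∀ i, D.Arc (c i) (c (i + 1))

/-- `D` has a (directed) cycle through all vertices of `S`. -/
def CycleThrough (D : Dgr V) (S : Set V) : Prop :=
  ∃ (k : ℕ) (c : ZMod k → V), D.IsCycle c ∧ S ⊆ Set.range c

/-- A Hamiltonian cycle: a cycle through all the vertices. -/
def Hamiltonian (D : Dgr V) [Fintype V] : Prop :=
  ∃ c : ZMod (Fintype.card V) → V, D.IsCycle c ∧ Function.Surjective c

/-- `D` is strong: a directed path (walk) from `u` to `v` for every pair of
distinct vertices. -/
def Strong (D : Dgr V) : Prop :=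
  ∀ u v : V, u ≠ v → Relation.TransGen D.Arc u v

/-- The induced subdigraph on a set `S` of vertices. -/
def restrict (D : Dgr V) (S : Set V) : Dgr S where
  Arc a b := D.Arc a b
  loopless v := D.loopless v

/-- `D` is 2-strong: at least 3 vertices, and deleting any single vertex leaves
a strong digraph. -/
def TwoStrong (D : Dgr V) [Fintype V] : Prop :=
  3 ≤ Fintype.card V ∧ ∀ w : V, (D.restrict {v | v ≠ w}).Strong

/-- Isomorphism of digraphs. -/
def Iso (D : Dgr V) {W : Type*} (E : Dgr W) : Prop :=
  ∃ e : V ≃ W, ∀ a b : V, D.Arc a b ↔ E.Arc (e a) (e b)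

end Dgr

/-- A digraph defined by a list of arcs. -/
def ofList {V : Type*} [DecidableEq V] (l : List (V × V)) (h : ∀ v : V, (v, v) ∉ l) :
    Dgr V where
  Arc a b := (a, b) ∈ l
  loopless v hv := h v hv

/-- Arcs of the digraph `D₅` (vertices `x₁,x₂,x₃ = 0,1,2`, `x = 3`, `y = 4`):
`N⁺(x₁)={x₂,y}`, `N⁺(x₂)={x₃,x}`, `N⁺(x₃)={x,y}`, `N⁺(x)={x₁,x₂}`, `N⁺(y)={x₁,x₃}`. -/
def D5arcs : List (Fin 5 × Fin 5) :=
  [(0,1),(0,4),(1,2),(1,3),(2,3),(2,4),(3,0),(3,1),(4,0),(4,2)]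

/-- The digraph `D₅`. -/
def D5 : Dgr (Fin 5) := ofList D5arcs (by decide)

/-- `L₁`: the three digraphs obtained from `D₅` by adding the arc `x₁x₃`, the arc
`x₃x₁`, or both. -/
def L1 : Set (Dgr (Fin 5)) :=
  {ofList ((0,2) :: D5arcs) (by decide),
   ofList ((2,0) :: D5arcs) (by decide),
   ofList ((0,2) :: (2,0) :: D5arcs) (by decide)}

/-- Arcs of the digraph `D₇` (vertices `x₁,…,x₅ = 0,…,4`, `x = 5`, `y = 6`):
`N⁺(x₁)={x₂,x₅,y}`, `N⁺(x₂)={x₃,x₄,y}`, `N⁺(x₃)={x₂,x₄,x}`, `N⁺(x₄)={x₃,x₅,x}`,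
`N⁺(x₅)={x₁,x,y}`, `N⁺(x)={x₁,x₂,x₃}`, `N⁺(y)={x₁,x₄,x₅}`. -/
def D7arcs : List (Fin 7 × Fin 7) :=
  [(0,1),(0,4),(0,6),(1,2),(1,3),(1,6),(2,1),(2,3),(2,5),(3,2),(3,4),(3,5),
   (4,0),(4,5),(4,6),(5,0),(5,1),(5,2),(6,0),(6,3),(6,4)]

/-- The digraph `D₇`. -/
def D7 : Dgr (Fin 7) := ofList D7arcs (by decide)

/-- Membership in the class `L₂`: there is an enumeration `x_1,…,x_{2m}, x` of the
vertices (here `b i = x_i`, indices mod `2m`, so `b 0 = x_{2m}`) such that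
`x_1x_2⋯x_{2m}x_1` is a cycle, `x` and `x_{2m}` are nonadjacent,
`N⁺(x) = N⁺(x_{2m}) = {x_1,…,x_m}`, `N⁻(x) = N⁻(x_{2m}) = {x_m,…,x_{2m-1}}`,
and there is no arc from `{x_1,…,x_{m-1}}` to `{x_{m+1},…,x_{2m-1}}`. -/
def InL2 {V : Type*} (D : Dgr V) (m : ℕ) : Prop :=
  ∃ (b : ZMod (2 * m) → V) (x : V),
    1 ≤ m ∧
    Function.Injective b ∧ x ∉ Set.range b ∧
    (∀ i, D.Arc (b i) (b (i + 1))) ∧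
    ¬ D.Adj x (b 0) ∧
    {v | D.Arc x v} = (fun i : ℕ => b i) '' Set.Icc 1 m ∧
    {v | D.Arc (b 0) v} = (fun i : ℕ => b i) '' Set.Icc 1 m ∧
    {v | D.Arc v x} = (fun i : ℕ => b i) '' Set.Icc m (2 * m - 1) ∧
    {v | D.Arc v (b 0)} = (fun i : ℕ => b i) '' Set.Icc m (2 * m - 1) ∧
    (∀ i ∈ Set.Icc 1 (m - 1), ∀ j ∈ Set.Icc (m + 1) (2 * m - 1),
      ¬ D.Arc (b (i : ℕ)) (b (j : ℕ)))

/-- `K*_{m,m+1} ⊆ D ⊆ [K_m + K̄_{m+1}]*` (containments as spanning subdigraphs):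
the vertex set splits into `A` of size `m` and its complement of size `m+1`, all arcs
between `A` and `Aᶜ` are present in both directions, and there are no arcs inside `Aᶜ`. -/
def KSandwich {V : Type*} (D : Dgr V) (m : ℕ) : Prop :=
  ∃ A : Set V, A.ncard = m ∧ Aᶜ.ncard = m + 1 ∧
    (∀ a ∈ A, ∀ b ∈ Aᶜ, D.Arc a b ∧ D.Arc b a) ∧
    (∀ u ∈ Aᶜ, ∀ v ∈ Aᶜ, ¬ D.Arc u v)

/-- Alternative (iv) of Theorem 2: `D` has a cycle `C = z_1 z_2 ⋯ z_{2m} z_1` of length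
`2m` such that, with `z` the vertex off the cycle, at least `3` vertices of the cycle
are nonadjacent to `z`, and every cycle vertex `z_l` nonadjacent to `z` satisfies
`z_{l-1}z, z z_{l+1} ∈ A(D)`, `N⁺(z) = N⁺(z_l)` and `N⁻(z) = N⁻(z_l)`; in particular
these vertices together with `z` form an independent set. -/
def PropIV {V : Type*} (D : Dgr V) (m : ℕ) : Prop :=
  ∃ (c : ZMod (2 * m) → V) (z : V),
    D.IsCycle c ∧ z ∉ Set.range c ∧
    3 ≤ {i : ZMod (2 * m) | ¬ D.Adj z (c i)}.ncard ∧
    (∀ i : ZMod (2 * m), ¬ D.Adj z (c i) →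
      D.Arc (c (i - 1)) z ∧ D.Arc z (c (i + 1)) ∧
      {v | D.Arc z v} = {v | D.Arc (c i) v} ∧
      {v | D.Arc v z} = {v | D.Arc v (c i)}) ∧
    (insert z (c '' {i | ¬ D.Adj z (c i)})).Pairwise (fun a b => ¬ D.Adj a b)


/-!
Suppose `x_i` is adjacent to neither `x` nor `y`. A cycle through all vertices but one, say `v`,
forces `v` to be a `T`-vertex that cannot be inserted into the cycle. So the positions of the
out-neighbours of `v` and the successor positions of its in-neighbours are disjoint sets of at least
`m` of the `2m` positions: every position `s` has `v → x_s` or `x_{s-1} → v`. Applied to the cycle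
`C` and `x`, then to the cycles obtained from `C` by replacing `y`, resp. `x_i`, by `x`, this yields
`x → x_1`, `x_{i-1} → y` and `x_p → x_i`. Together with `x_{p-1} → x` and `y → x_p` these arcs
give the Hamiltonian cycle `x_1 ⋯ x_{i-1} y x_p x_i ⋯ x_{p-1} x x_1`.
-/

open Set Function

lemma insert_compl_singleton {α : Type*} (x : α) : insert x ({x}ᶜ : Set α) = univ := by
  rw [insert_eq, union_compl_self]

lemma range_update_eq_compl {ι V : Type*} [DecidableEq ι] {b : ι → V} (hb : Injective b) {x : V}
    (hrange : range b = {x}ᶜ) (j : ι) : range (update b j x) = {b j}ᶜ := by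
  ext u
  simp only [mem_range, mem_compl_iff, mem_singleton_iff]
  constructor
  · rintro ⟨t, rfl⟩
    by_cases ht : t = j
    · subst ht
      rw [update_self]
      exact fun h => (hrange ▸ mem_range_self t : b t ∈ ({x}ᶜ : Set V)) h.symm
    · rw [update_of_ne ht]
      exact hb.ne ht
  · intro hu
    by_cases hux : u = x
    · exact ⟨j, by rw [update_self, hux]⟩
    · obtain ⟨t, rfl⟩ : u ∈ range b := hrange ▸ hux
      exact ⟨t, update_of_ne (fun h => hu (by rw [h])) _ _⟩

lemma range_eq_compl_of_card {ι V : Type*} [Finite V] {b : ι → V} (hb : Injective b) {x : V}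
    (hx : x ∉ range b) (hcard : Nat.card V = Nat.card ι + 1) : range b = {x}ᶜ := by
  refine eq_of_subset_of_ncard_le (fun u hu h => hx (h ▸ hu)) ?_ (toFinite _)
  rw [ncard_compl, ncard_singleton, ncard_range_of_injective hb]
  omega

lemma ZMod.natCast_injOn (k : ℕ) : InjOn (Nat.cast : ℕ → ZMod k) (Iio k) :=
  fun s hs t ht h => by rw [← ZMod.val_natCast_of_lt hs, ← ZMod.val_natCast_of_lt ht, h]

lemma ZMod.natCast_ne_zero_of_pos_of_lt {k a : ℕ} (ha : 0 < a) (hak : a < k) :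
    (a : ZMod k) ≠ 0 := by
  rw [Ne, ZMod.natCast_eq_zero_iff]
  exact Nat.not_dvd_of_pos_of_lt ha hak

def snocSeq {V : Type*} {k : ℕ} (b : ZMod k → V) (x : V) (t : ℕ) : V :=
  if t < k then b t else x

section snocSeq

variable {V : Type*} {k : ℕ} {b : ZMod k → V} {x : V}

lemma snocSeq_of_lt {t : ℕ} (ht : t < k) : snocSeq b x t = b t := if_pos ht

lemma snocSeq_self : snocSeq b x k = x := if_neg (lt_irrefl k)

lemma injOn_snocSeq (hb : Injective b) (hx : x ∉ range b) : InjOn (snocSeq b x) (Iio (k + 1)) := by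
  intro s hs t ht h
  simp only [mem_Iio] at hs ht
  rcases Nat.lt_succ_iff_lt_or_eq.1 hs with hs | rfl <;>
    rcases Nat.lt_succ_iff_lt_or_eq.1 ht with ht | rfl
  · rw [snocSeq_of_lt hs, snocSeq_of_lt ht] at h
    exact ZMod.natCast_injOn k hs ht (hb h)
  · rw [snocSeq_of_lt hs, snocSeq_self] at h
    exact (hx ⟨_, h⟩).elim
  · rw [snocSeq_of_lt ht, snocSeq_self] at h
    exact (hx ⟨_, h.symm⟩).elim
  · rfl

lemma image_snocSeq [NeZero k] : snocSeq b x '' Iio (k + 1) = insert x (range b) := by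
  ext u
  constructor
  · rintro ⟨t, ht, rfl⟩
    rcases Nat.lt_succ_iff_lt_or_eq.1 ht with ht | rfl
    · exact Or.inr ⟨_, (snocSeq_of_lt ht).symm⟩
    · exact Or.inl snocSeq_self
  · rintro (rfl | ⟨t, rfl⟩)
    · exact ⟨k, by simp, snocSeq_self⟩
    · refine ⟨t.val, by simpa using t.val_lt.trans (Nat.lt_succ_self k), ?_⟩
      rw [snocSeq_of_lt t.val_lt, ZMod.natCast_zmod_val]

end snocSeq

namespace Dgr

variable {V : Type*} {D : Dgr V}

lemma ne_of_arc {u v : V} (h : D.Arc u v) : u ≠ v := by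
  rintro rfl
  exact D.loopless u h

lemma outDeg_eq_ncard_of_range_eq_compl {ι : Type*} {c : ι → V} (hc : Injective c) {v : V}
    (hrange : range c = {v}ᶜ) : D.outDeg v = {j | D.Arc v (c j)}.ncard :=
  (ncard_preimage_of_injective_subset_range hc fun _ hu => hrange ▸ (ne_of_arc hu).symm).symm

lemma inDeg_eq_ncard_of_range_eq_compl {ι : Type*} {c : ι → V} (hc : Injective c) {v : V}
    (hrange : range c = {v}ᶜ) : D.inDeg v = {j | D.Arc (c j) v}.ncard :=
  (ncard_preimage_of_injective_subset_range hc fun _ hu => hrange ▸ ne_of_arc hu).symm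

lemma exists_isCycle_of_path {N : ℕ} (hN : 2 ≤ N) (f : ℕ → V) (hf : InjOn f (Iio N))
    (harc : ∀ a, a + 1 < N → D.Arc (f a) (f (a + 1))) (hclose : D.Arc (f (N - 1)) (f 0)) :
    ∃ c : ZMod N → V, D.IsCycle c ∧ range c = f '' Iio N := by
  have : NeZero N := ⟨by omega⟩
  refine ⟨fun t => f t.val, ⟨hN, fun s t h => ZMod.val_injective N (hf s.val_lt t.val_lt h),
    fun t => ?_⟩, ?_⟩
  · obtain ⟨a, ha, rfl⟩ : ∃ a < N, (a : ZMod N) = t := ⟨t.val, t.val_lt, ZMod.natCast_zmod_val t⟩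
    dsimp only
    rw [← Nat.cast_succ, ZMod.val_natCast_of_lt ha]
    rcases (Nat.succ_le_of_lt ha).lt_or_eq with h | h
    · rw [ZMod.val_natCast_of_lt h]
      exact harc a h
    · rw [h, ZMod.natCast_self, ZMod.val_zero, show a = N - 1 by omega]
      exact hclose
  · ext u
    constructor
    · rintro ⟨t, rfl⟩
      exact ⟨t.val, t.val_lt, rfl⟩
    · rintro ⟨a, ha, rfl⟩
      exact ⟨a, by simp only [ZMod.val_natCast_of_lt (mem_Iio.1 ha)]⟩

namespace IsCycle

variable {k : ℕ} {b : ZMod k → V}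

lemma injective (hb : D.IsCycle b) : Injective b := hb.2.1

lemma arc (hb : D.IsCycle b) (t : ZMod k) : D.Arc (b t) (b (t + 1)) := hb.2.2 t

lemma arc_natCast (hb : D.IsCycle b) (t : ℕ) : D.Arc (b t) (b (t + 1 : ℕ)) := by
  simpa using hb.arc t

lemma neZero (hb : D.IsCycle b) : NeZero k := ⟨by have := hb.1; omega⟩

lemma comp_add_left (hb : D.IsCycle b) (r : ZMod k) : D.IsCycle (fun t => b (r + t)) :=
  ⟨hb.1, hb.injective.comp (add_right_injective r), fun t => by
    simpa [add_assoc] using hb.arc (r + t)⟩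

lemma update (hb : D.IsCycle b) {x : V} (hx : x ∉ range b) {j : ZMod k}
    (hin : D.Arc (b (j - 1)) x) (hout : D.Arc x (b (j + 1))) : D.IsCycle (update b j x) := by
  have : Fact (1 < k) := ⟨hb.1⟩
  have hj : j + 1 ≠ j := by simp
  refine ⟨hb.1, fun s t h => ?_, fun t => ?_⟩
  · by_cases hs : s = j <;> by_cases ht : t = j
    · rw [hs, ht]
    · rw [hs, update_self, update_of_ne ht] at h
      exact (hx ⟨t, h.symm⟩).elim
    · rw [ht, update_self, update_of_ne hs] at h
      exact (hx ⟨s, h⟩).elim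
    · rw [update_of_ne hs, update_of_ne ht] at h
      exact hb.injective h
  · by_cases ht : t = j
    · rw [ht, update_self, update_of_ne hj]
      exact hout
    · by_cases ht1 : t + 1 = j
      · rw [update_of_ne ht, ht1, update_self, eq_sub_of_add_eq ht1]
        exact hin
      · rw [update_of_ne ht, update_of_ne ht1]
        exact hb.arc t

lemma exists_insert (hb : D.IsCycle b) {x : V} (hx : x ∉ range b) {j : ZMod k}
    (hin : D.Arc (b j) x) (hout : D.Arc x (b (j + 1))) :
    ∃ c : ZMod (k + 1) → V, D.IsCycle c ∧ range c = insert x (range b) := by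
  have := hb.neZero
  set b' : ZMod k → V := fun t => b (j + 1 + t) with hb'_def
  have hb' : D.IsCycle b' := hb.comp_add_left (j + 1)
  have hrange : range b' = range b := (add_left_surjective (j + 1)).range_comp b
  have harc : ∀ a, a + 1 < k + 1 → D.Arc (snocSeq b' x a) (snocSeq b' x (a + 1)) := by
    intro a ha
    rcases (Nat.lt_succ_iff.1 ha).lt_or_eq with h | h
    · rw [snocSeq_of_lt (by omega), snocSeq_of_lt h]
      exact hb'.arc_natCast a
    · have ha1 : (a : ZMod k) = -1 := by
        rw [eq_neg_iff_add_eq_zero, ← Nat.cast_add_one, h, ZMod.natCast_self]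
      rw [snocSeq_of_lt (by omega), h, snocSeq_self]
      simpa [hb'_def, ha1] using hin
  have hclose : D.Arc (snocSeq b' x (k + 1 - 1)) (snocSeq b' x 0) := by
    rw [Nat.add_sub_cancel, snocSeq_self, snocSeq_of_lt (NeZero.pos k)]
    simpa [hb'_def] using hout
  obtain ⟨c, hc, hcr⟩ := exists_isCycle_of_path (by have := hb.1; omega) (snocSeq b' x)
    (injOn_snocSeq hb'.injective (hrange ▸ hx)) harc hclose
  exact ⟨c, hc, by rw [hcr, image_snocSeq, hrange]⟩

/-- The rerouted cycle is `b 1 ⋯ b (i-1) (b 0) (b (k-1)) (b i) ⋯ b (k-2) x`. -/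
lemma exists_reroute (hb : D.IsCycle b) {x : V} (hx : x ∉ range b) {i : ℕ} (hi : 2 ≤ i)
    (hik : i + 2 ≤ k) (h₁ : D.Arc (b (i - 1 : ℕ)) (b 0)) (h₂ : D.Arc (b 0) (b (k - 1 : ℕ)))
    (h₃ : D.Arc (b (k - 1 : ℕ)) (b i)) (h₄ : D.Arc (b (k - 2 : ℕ)) x) (h₅ : D.Arc x (b 1)) :
    ∃ c : ZMod (k + 1) → V, D.IsCycle c ∧ range c = insert x (range b) := by
  have := hb.neZero
  set g : ℕ → ℕ := fun a => if a + 1 < i then a + 1 else if a + 1 = i then 0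
    else if a = i then k - 1 else if a < k then a - 1 else k with hg
  have hg_lo : ∀ a, a + 1 < i → g a = a + 1 := fun a h => if_pos h
  have hg_pred : g (i - 1) = 0 := by simp only [hg]; split_ifs <;> omega
  have hg_i : g i = k - 1 := by simp only [hg]; split_ifs <;> omega
  have hg_hi : ∀ a, i < a → a < k → g a = a - 1 := by
    intro a h h'; simp only [hg]; split_ifs <;> omega
  have hg_k : g k = k := by simp only [hg]; split_ifs <;> omega
  have hgmaps : MapsTo g (Iio (k + 1)) (Iio (k + 1)) := by
    intro a ha; simp only [mem_Iio, hg] at *; split_ifs <;> omega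
  have hginj : InjOn g (Iio (k + 1)) := by
    intro a ha a' ha' h; simp only [mem_Iio, hg] at *; split_ifs at h <;> omega
  have hgimage : g '' Iio (k + 1) = Iio (k + 1) :=
    (((finite_Iio _).injOn_iff_bijOn_of_mapsTo hgmaps).1 hginj).image_eq
  have harc : ∀ a, a + 1 < k + 1 → D.Arc (snocSeq b x (g a)) (snocSeq b x (g (a + 1))) := by
    intro a ha
    obtain h | h | h | h | h | h : a + 2 < i ∨ a + 2 = i ∨ a + 1 = i ∨ a = i ∨
        (i < a ∧ a + 1 < k) ∨ a + 1 = k := by omega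
    · rw [hg_lo a (by omega), hg_lo (a + 1) (by omega), snocSeq_of_lt (by omega),
        snocSeq_of_lt (by omega)]
      exact hb.arc_natCast (a + 1)
    · rw [hg_lo a (by omega), show a + 1 = i - 1 by omega, hg_pred, snocSeq_of_lt (by omega),
        snocSeq_of_lt (by omega), Nat.cast_zero]
      exact h₁
    · rw [h, show a = i - 1 by omega, hg_pred, hg_i, snocSeq_of_lt (by omega),
        snocSeq_of_lt (by omega), Nat.cast_zero]
      exact h₂
    · rw [h, hg_i, hg_hi (i + 1) (by omega) (by omega), Nat.add_sub_cancel,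
        snocSeq_of_lt (by omega), snocSeq_of_lt (by omega)]
      exact h₃
    · rw [hg_hi a h.1 (by omega), hg_hi (a + 1) (by omega) h.2, Nat.add_sub_cancel,
        snocSeq_of_lt (by omega), snocSeq_of_lt (by omega)]
      simpa [Nat.sub_add_cancel (show 1 ≤ a by omega)] using hb.arc_natCast (a - 1)
    · rw [h, hg_k, snocSeq_self, hg_hi a (by omega) (by omega), snocSeq_of_lt (by omega),
        show a - 1 = k - 2 by omega]
      exact h₄
  have hclose : D.Arc (snocSeq b x (g (k + 1 - 1))) (snocSeq b x (g 0)) := by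
    rw [Nat.add_sub_cancel, hg_k, hg_lo 0 (by omega), snocSeq_self, snocSeq_of_lt (by omega),
      zero_add, Nat.cast_one]
    exact h₅
  obtain ⟨c, hc, hcr⟩ := exists_isCycle_of_path (by omega) (snocSeq b x ∘ g)
    ((injOn_snocSeq hb.injective hx).comp hginj hgmaps) harc hclose
  exact ⟨c, hc, by rw [hcr, image_comp, hgimage, image_snocSeq]⟩

end IsCycle

lemma arc_or_arc_of_range_eq_compl {m : ℕ} (hT : ¬ D.CycleThrough {u | D.TVertex m u})
    {c : ZMod (2 * m) → V} (hc : D.IsCycle c) {v : V} (hrange : range c = {v}ᶜ)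
    (s : ZMod (2 * m)) : D.Arc v (c s) ∨ D.Arc (c (s - 1)) v := by
  have := hc.neZero
  have hv : v ∉ range c := by simp [hrange]
  have hTv : D.TVertex m v := by
    by_contra h
    exact hT ⟨2 * m, c, hc, fun u hu => hrange ▸ fun (huv : u = v) => h (huv ▸ hu)⟩
  have hnoins : ∀ j, ¬ (D.Arc (c j) v ∧ D.Arc v (c (j + 1))) := by
    rintro j ⟨hin, hout⟩
    obtain ⟨c', hc', hc'r⟩ := hc.exists_insert hv hin hout
    exact hT ⟨_, c', hc', by simp [hc'r, hrange, insert_compl_singleton]⟩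
  set P := {s | D.Arc v (c s)}
  set Q := {s | D.Arc (c (s - 1)) v}
  have hP : m ≤ P.ncard := outDeg_eq_ncard_of_range_eq_compl hc.injective hrange ▸ hTv.1
  have hQ : m ≤ Q.ncard := by
    have hQ' : Q = (· - 1) ⁻¹' {j | D.Arc (c j) v} := rfl
    rw [hQ', ncard_preimage_of_injective_subset_range sub_left_injective
      fun j _ => ⟨j + 1, add_sub_cancel_right j 1⟩,
      ← inDeg_eq_ncard_of_range_eq_compl hc.injective hrange]
    exact hTv.2
  have hPQ : Disjoint P Q :=
    disjoint_left.2 fun s hs hs' => hnoins (s - 1) ⟨hs', by rw [sub_add_cancel]; exact hs⟩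
  by_contra! h
  have hs : s ∉ P ∪ Q := fun hs => hs.elim h.1 h.2
  have hlt : (P ∪ Q).ncard < (univ : Set (ZMod (2 * m))).ncard :=
    ncard_lt_ncard (ssubset_univ_iff.2 fun h' => hs (by rw [h']; exact mem_univ s))
  rw [ncard_union_eq hPQ, ncard_univ, Nat.card_zmod] at hlt
  omega

end Dgr

open Dgr

theorem statement7_general {V : Type*} [Fintype V] (m : ℕ) (D : Dgr V)
    (hcard : Fintype.card V = 2 * m + 1)
    (hnocyc : ¬ D.CycleThrough {u | D.TVertex m u})
    (b : ZMod (2 * m) → V) (hb : D.IsCycle b)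
    (x : V) (hx : x ∉ Set.range b)
    (hxy : ¬ D.Adj x (b 0))
    (h1 : D.Arc (b ((2 * m - 2 : ℕ) : ZMod (2 * m))) x)
    (h2 : D.Arc (b 0) (b ((2 * m - 1 : ℕ) : ZMod (2 * m)))) :
    ∀ i : ℕ, 2 ≤ i → i ≤ 2 * m - 3 →
      D.Adj (b (i : ZMod (2 * m))) x ∨ D.Adj (b (i : ZMod (2 * m))) (b 0) := by
  intro i hi hi'
  by_contra! ⟨hix, hiy⟩
  have hrange : range b = {x}ᶜ :=
    range_eq_compl_of_card hb.injective hx (by simp [Nat.card_eq_fintype_card, hcard])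
  have hsub : ((i - 1 : ℕ) : ZMod (2 * m)) = i - 1 := by simp [Nat.cast_sub (by omega : 1 ≤ i)]
  have hneg : ((2 * m - 1 : ℕ) : ZMod (2 * m)) = -1 := by
    rw [Nat.cast_sub (by omega), ZMod.natCast_self, Nat.cast_one, zero_sub]
  have hi0 : (i : ZMod (2 * m)) ≠ 0 := ZMod.natCast_ne_zero_of_pos_of_lt (by omega) (by omega)
  have hi1 : (i : ZMod (2 * m)) - 1 ≠ 0 :=
    hsub ▸ ZMod.natCast_ne_zero_of_pos_of_lt (by omega) (by omega)
  have hi2 : (i : ZMod (2 * m)) ≠ -1 := fun h => ZMod.natCast_ne_zero_of_pos_of_lt (k := 2 * m)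
    (a := i + 1) (by omega) (by omega) (by push_cast [h]; ring)
  have hxb := arc_or_arc_of_range_eq_compl hnocyc hb hrange
  have hx0 : D.Arc (b (0 - 1)) x := (hxb 0).resolve_left fun h => hxy (Or.inl h)
  have hx1 : D.Arc x (b 1) := (hxb 1).resolve_right fun h => hxy (Or.inr (by simpa using h))
  have hxi : D.Arc (b (i - 1)) x := (hxb i).resolve_left fun h => hix (Or.inr h)
  have hxi1 : D.Arc x (b (i + 1)) :=
    (hxb (i + 1)).resolve_right fun h => hix (Or.inl (by simpa using h))
  have hyb := arc_or_arc_of_range_eq_compl hnocyc (hb.update hx hx0 (by simpa using hx1))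
    (range_update_eq_compl hb.injective hrange 0) i
  rw [update_of_ne hi0, update_of_ne hi1] at hyb
  have hyi : D.Arc (b (i - 1)) (b 0) := hyb.resolve_left fun h => hiy (Or.inr h)
  have hib := arc_or_arc_of_range_eq_compl hnocyc (hb.update hx hxi hxi1)
    (range_update_eq_compl hb.injective hrange i) 0
  rw [update_of_ne hi0.symm, zero_sub, update_of_ne hi2.symm] at hib
  have hii : D.Arc (b (-1)) (b i) := hib.resolve_left fun h => hiy (Or.inl h)
  obtain ⟨c, hc, hcr⟩ := hb.exists_reroute hx hi (by omega) (by rwa [hsub]) h2 (by rwa [hneg])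
    h1 (by simpa using hx1)
  exact hnocyc ⟨_, c, hc, by simp [hcr, hrange, insert_compl_singleton]⟩

/-- **Claim 4.** Setup as in Claim 3 (`b i = x_i`, `y = x_{n-1} = b 0`, `p = n-2 = 2m-1`).
If `x_{p-1} x ∈ D` and `y x_p ∈ D`, then every `x_i` with `i ∈ [2, p-2]` is adjacent to
`x` or to `y`, i.e. `d(x_i, {x,y}) ≥ 1`. -/
theorem statement7 {V : Type*} [Fintype V] (m : ℕ) (D : Dgr V)
    (hcard : Fintype.card V = 2 * m + 1) (hn : 5 ≤ 2 * m + 1)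
    (hstrong : D.Strong)
    (hnocyc : ¬ D.CycleThrough {u | D.TVertex m u})
    (b : ZMod (2 * m) → V) (hb : D.IsCycle b)
    (x : V) (hx : x ∉ Set.range b)
    (hxy : ¬ D.Adj x (b 0))
    (h1 : D.Arc (b ((2 * m - 2 : ℕ) : ZMod (2 * m))) x)
    (h2 : D.Arc (b 0) (b ((2 * m - 1 : ℕ) : ZMod (2 * m)))) :
    ∀ i : ℕ, 2 ≤ i → i ≤ 2 * m - 3 →
      D.Adj (b (i : ZMod (2 * m))) x ∨ D.Adj (b (i : ZMod (2 * m))) (b 0) :=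
  statement7_general m D hcard hnocyc b hb x hx hxy h1 h2
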